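/- For every cube-free integer D > 2, the torsion subgroup of the Mordell–Weil group E(ℚ) of the elliptic curve E : y² = x³ − 432·D² is trivial. -/

import Mathlib

open WeierstrassCurve.Affine TensorProduct
open scoped WeierstrassCurve

/-- The Mordell curve `y² = x³ + k` over `ℚ`. -/
def mordell (k : ℚ) : WeierstrassCurve.Affine ℚ :=
  { a₁ := 0, a₂ := 0, a₃ := 0, a₄ := 0, a₆ := k }

/-- The Mordell--Weil rank of `W` over `K`, i.e. `dim_ℚ (W(K) ⊗ ℚ)`. -/
noncomputable def mwRank (W : WeierstrassCurve.Affine ℚ) (K : Type) [Field K] [Algebra ℚ K] : ℕ :=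
  letI := Classical.decEq K
  Module.finrank ℚ (ℚ ⊗[ℤ] WeierstrassCurve.Affine.Point (WeierstrassCurve.baseChange W K))

/-- A nonzero integer is cube-free if it is divisible by no nontrivial cube. -/
def CubeFree (D : ℤ) : Prop := ∀ n : ℤ, n ^ 3 ∣ D → IsUnit n

/-!
A rational point `(x, y)` of `y² = x³ - 432 D²` gives the point `u = (36 D + y) / (6 x)`,
`v = (36 D - y) / (6 x)` of the Fermat cubic `u³ + v³ = D`, and doubling on the curve becomes the
duplication `u ↦ v (2 u³ + v³) / (v³ - u³)` on the cubic. In lowest terms `u = a / c`, `v = b / c`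
share their denominator, cube-freeness makes `a`, `b`, `c` pairwise coprime, and then the
denominator of the duplicated `u` is a proper multiple of `c`. So the denominator of `u` strictly
increases along `P, 2P, 4P, …`, which is impossible for a point of finite order; `2`-torsion is
excluded since `y = 0` would give `2 u³ = D`.
-/

theorem IsOfFinAddOrder.eq_zero_of_lt_apply_add_self {G α : Type*} [AddMonoid G] [Preorder α]
    {f : G → α} (hf : ∀ Q : G, Q ≠ 0 → Q + Q ≠ 0 ∧ f Q < f (Q + Q)) {P : G}
    (hP : IsOfFinAddOrder P) : P = 0 := by
  by_contra hP0
  have hdouble (n : ℕ) : 2 ^ (n + 1) • P = 2 ^ n • P + 2 ^ n • P := by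
    rw [pow_succ, mul_two, add_nsmul]
  have hne (n : ℕ) : 2 ^ n • P ≠ 0 := by
    induction n with
    | zero => simpa using hP0
    | succ n ih => rw [hdouble]; exact (hf _ ih).1
  have hmono : StrictMono fun n : ℕ ↦ f (2 ^ n • P) :=
    strictMono_nat_of_lt_succ fun n ↦ hdouble n ▸ (hf _ (hne n)).2
  obtain ⟨m, n, hmn, heq⟩ := hP.finite_multiples.exists_lt_map_eq_of_forall_mem
    (f := fun n : ℕ ↦ 2 ^ n • P) fun n ↦ (AddSubmonoid.mem_multiples_iff _ _).2 ⟨2 ^ n, rfl⟩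
  exact hmn.ne (hmono.injective (congrArg f heq))

lemma Rat.den_eq_one_of_pow_eq_intCast {q : ℚ} {n : ℕ} {m : ℤ} (hn : n ≠ 0) (h : q ^ n = m) :
    q.den = 1 := by
  have : q.den ^ n = 1 := by rw [← Rat.den_pow, h, Rat.den_intCast]
  simpa [hn] using this

lemma Rat.den_eq_den_of_pow_add_pow_eq_intCast {u v : ℚ} {n : ℕ} {m : ℤ} (hn : n ≠ 0)
    (h : u ^ n + v ^ n = m) : u.den = v.den := by
  have : u.den ^ n = v.den ^ n := by
    rw [← Rat.den_pow, ← Rat.den_pow, eq_sub_of_add_eq h, Rat.intCast_sub_den, Rat.den_pow]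
  exact Nat.pow_left_injective hn this

lemma not_pow_three_sub_pow_three_dvd_three {a b : ℤ} (ha : a ≠ 0) (hb : b ≠ 0) :
    ¬ a ^ 3 - b ^ 3 ∣ 3 := by
  intro h
  have hq : a ^ 2 + a * b + b ^ 2 ≤ 3 :=
    Int.le_of_dvd (by norm_num) ((Dvd.intro_left (a - b) (by ring)).trans h)
  obtain ⟨ha₁, ha₂⟩ : a ≤ 2 ∧ -2 ≤ a := by constructor <;> nlinarith [sq_nonneg (a + 2 * b)]
  obtain ⟨hb₁, hb₂⟩ : b ≤ 2 ∧ -2 ≤ b := by constructor <;> nlinarith [sq_nonneg (2 * a + b)]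
  interval_cases a <;> interval_cases b <;> simp_all

lemma IsCoprime.pow_three_sub_pow_three_left {a b : ℤ} (h : IsCoprime a b) :
    IsCoprime (b ^ 3 - a ^ 3) b := by
  rw [show b ^ 3 - a ^ 3 = -a ^ 3 + b ^ 2 * b by ring]
  exact (h.pow_left (m := 3)).neg_left.add_mul_right_left (b ^ 2)

lemma not_pow_three_sub_pow_three_dvd {a b : ℤ} (ha : a ≠ 0) (hb : b ≠ 0) (hab : IsCoprime a b) :
    ¬ b ^ 3 - a ^ 3 ∣ b * (2 * a ^ 3 + b ^ 3) := by
  intro h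
  have hcop := hab.pow_three_sub_pow_three_left
  have h3 : b ^ 3 - a ^ 3 ∣ b ^ 3 * 3 := by
    rw [show b ^ 3 * 3 = (2 * a ^ 3 + b ^ 3) + 2 * (b ^ 3 - a ^ 3) by ring]
    exact dvd_add (hcop.dvd_of_dvd_mul_left h) (dvd_mul_left _ _)
  exact not_pow_three_sub_pow_three_dvd_three hb ha (hcop.pow_right.dvd_of_dvd_mul_left h3)

lemma lt_den_duplication {D a b c : ℤ} (habc : a ^ 3 + b ^ 3 = D * c ^ 3) (hab : IsCoprime a b)
    (hac : IsCoprime a c) (hbc : IsCoprime b c) (ha : a ≠ 0) (hb : b ≠ 0) (hba : b ^ 3 ≠ a ^ 3)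
    (hc : 0 < c) :
    c < (((b * (2 * a ^ 3 + b ^ 3) : ℤ) : ℚ) / ((c * (b ^ 3 - a ^ 3) : ℤ) : ℚ)).den := by
  set q : ℚ := ((b * (2 * a ^ 3 + b ^ 3) : ℤ) : ℚ) / ((c * (b ^ 3 - a ^ 3) : ℤ) : ℚ)
  have hC : ((c * (b ^ 3 - a ^ 3) : ℤ) : ℚ) ≠ 0 := by
    exact_mod_cast mul_ne_zero hc.ne' (sub_ne_zero.2 hba)
  have hq : q.num * (c * (b ^ 3 - a ^ 3)) = b * (2 * a ^ 3 + b ^ 3) * q.den := by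
    have : (q.num : ℚ) = q * q.den := (Rat.mul_den_eq_num q).symm
    rw [div_mul_eq_mul_div, eq_div_iff hC] at this
    exact_mod_cast this
  have hcB : IsCoprime c (b * (2 * a ^ 3 + b ^ 3)) := by
    refine hbc.symm.mul_right ?_
    rw [show 2 * a ^ 3 + b ^ 3 = a ^ 3 + D * c ^ 2 * c by linear_combination habc]
    exact (hac.pow_left.add_mul_right_left _).symm
  have hdvd : c ∣ q.den :=
    hcB.dvd_of_dvd_mul_left ⟨q.num * (b ^ 3 - a ^ 3), by linear_combination -hq⟩
  have hne : (q.den : ℤ) ≠ c := by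
    intro h
    rw [h] at hq
    exact not_pow_three_sub_pow_three_dvd ha hb hab
      ⟨q.num, mul_left_cancel₀ hc.ne' (by linear_combination -hq)⟩
  exact lt_of_le_of_ne (Int.le_of_dvd (by positivity) hdvd) hne.symm

namespace CubeFree

variable {D : ℤ} (hD : CubeFree D)
include hD

lemma pow_three_ne (hD1 : 1 < |D|) (z : ℤ) : z ^ 3 ≠ D := by
  rintro rfl
  rcases Int.isUnit_iff.mp (hD z dvd_rfl) with rfl | rfl <;> norm_num at hD1

lemma two_mul_pow_three_ne (hD2 : 2 < |D|) (z : ℤ) : 2 * z ^ 3 ≠ D := by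
  rintro rfl
  rcases Int.isUnit_iff.mp (hD z (dvd_mul_left _ _)) with rfl | rfl <;> norm_num at hD2

lemma rat_pow_three_ne (hD1 : 1 < |D|) (q : ℚ) : q ^ 3 ≠ D := by
  intro h
  have hq := Rat.coe_int_num_of_den_eq_one (Rat.den_eq_one_of_pow_eq_intCast three_ne_zero h)
  exact hD.pow_three_ne hD1 q.num (by exact_mod_cast hq.symm ▸ h)

lemma two_mul_rat_pow_three_ne (hD2 : 2 < |D|) (q : ℚ) : 2 * q ^ 3 ≠ D := by
  intro h
  have h4 : (2 * q) ^ 3 = ((4 * D : ℤ) : ℚ) := by push_cast; linear_combination 4 * h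
  have hz : (2 * q).num ^ 3 = 4 * D := by
    have := Rat.coe_int_num_of_den_eq_one (Rat.den_eq_one_of_pow_eq_intCast three_ne_zero h4)
    exact_mod_cast this.symm ▸ h4
  obtain ⟨w, hw⟩ : 2 ∣ (2 * q).num :=
    Int.prime_two.dvd_of_dvd_pow (n := 3) ⟨2 * D, by linear_combination hz⟩
  exact hD.two_mul_pow_three_ne hD2 w (by rw [hw] at hz; linarith)

lemma isCoprime_of_add_pow_three {a b c : ℤ} (h : a ^ 3 + b ^ 3 = D * c ^ 3)
    (hac : IsCoprime a c) : IsCoprime a b := by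
  set g : ℤ := (a.gcd b : ℤ)
  have hgc : IsCoprime g c := hac.of_isCoprime_of_dvd_left (Int.gcd_dvd_left a b)
  have hg3 : g ^ 3 ∣ D * c ^ 3 := h ▸ dvd_add (pow_dvd_pow_of_dvd (Int.gcd_dvd_left a b) 3)
    (pow_dvd_pow_of_dvd (Int.gcd_dvd_right a b) 3)
  have hg : IsUnit g := hD g (hgc.pow.dvd_of_dvd_mul_right hg3)
  rw [Int.isCoprime_iff_gcd_eq_one]
  simpa [g] using Int.isUnit_iff_natAbs_eq.mp hg

theorem den_lt_den_duplication (hD2 : 2 < |D|) {u v : ℚ} (huv : u ^ 3 + v ^ 3 = D) :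
    u.den < (v * (2 * u ^ 3 + v ^ 3) / (v ^ 3 - u ^ 3)).den := by
  have hden : v.den = u.den := (Rat.den_eq_den_of_pow_add_pow_eq_intCast three_ne_zero huv).symm
  have hac : IsCoprime u.num u.den := Int.isCoprime_iff_gcd_eq_one.2 u.reduced
  have hbc : IsCoprime v.num u.den := hden ▸ Int.isCoprime_iff_gcd_eq_one.2 v.reduced
  have hu : u = u.num / (u.den : ℤ) := by simp [Rat.num_div_den]
  have hv : v = v.num / (u.den : ℤ) := by simp [← hden, Rat.num_div_den]
  set a := u.num
  set b := v.num
  set c : ℤ := (u.den : ℤ)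
  have hc : 0 < c := by positivity
  have habc : a ^ 3 + b ^ 3 = D * c ^ 3 := by
    have : (a : ℚ) ^ 3 + b ^ 3 = D * c ^ 3 := by
      rw [hu, hv] at huv
      field_simp at huv
      linear_combination huv
    exact_mod_cast this
  have ha : a ≠ 0 := Rat.num_ne_zero.2 fun hu0 ↦
    hD.rat_pow_three_ne (by omega) v (by simpa [hu0] using huv)
  have hb : b ≠ 0 := Rat.num_ne_zero.2 fun hv0 ↦
    hD.rat_pow_three_ne (by omega) u (by simpa [hv0] using huv)
  have hba : b ^ 3 ≠ a ^ 3 := by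
    intro h
    refine hD.two_mul_rat_pow_three_ne hD2 u ?_
    have h' : (b : ℚ) ^ 3 = a ^ 3 := by exact_mod_cast h
    rw [← huv, hu, hv, div_pow, div_pow, h']
    ring
  have hu' : v * (2 * u ^ 3 + v ^ 3) / (v ^ 3 - u ^ 3)
      = ((b * (2 * a ^ 3 + b ^ 3) : ℤ) : ℚ) / ((c * (b ^ 3 - a ^ 3) : ℤ) : ℚ) := by
    have hc' : (c : ℚ) ≠ 0 := by positivity
    have hba' : (b : ℚ) ^ 3 - a ^ 3 ≠ 0 := sub_ne_zero.2 (by exact_mod_cast hba)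
    rw [hu, hv]
    field_simp
    push_cast
    ring
  rw [hu']
  exact Int.ofNat_lt.mp <|
    lt_den_duplication habc (hD.isCoprime_of_add_pow_three habc hac) hac hbc ha hb hba hc

end CubeFree

/-- `(fermatU D x y, fermatU D x (-y))` is the image of `(x, y)` on the cubic `u³ + v³ = D`. -/
def fermatU (D x y : ℚ) : ℚ := (36 * D + y) / (6 * x)

noncomputable def fermatDen (D : ℚ) : (mordell (-432 * D ^ 2)).Point → ℕ
  | .zero => 0
  | @Point.some _ _ _ x y _ => (fermatU D x y).den

lemma mordell_equation_iff {k x y : ℚ} : (mordell k).Equation x y ↔ y ^ 2 = x ^ 3 + k := by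
  simp [equation_iff, mordell]

lemma x_ne_zero_of_equation_mordell {k x y : ℚ} (hk : k < 0) (h : (mordell k).Equation x y) :
    x ≠ 0 := by
  rintro rfl
  rw [mordell_equation_iff] at h
  nlinarith [sq_nonneg y]

section

variable {D x y : ℚ}

lemma fermatU_pow_three_add (h : (mordell (-432 * D ^ 2)).Equation x y) (hx : x ≠ 0) :
    fermatU D x y ^ 3 + fermatU D x (-y) ^ 3 = D := by
  rw [mordell_equation_iff] at h
  unfold fermatU
  field_simp
  linear_combination 216 * D * h

lemma fermatU_duplication (h : (mordell (-432 * D ^ 2)).Equation x y) (hx : x ≠ 0) (hy : y ≠ 0)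
    (hx₂ : (3 * x ^ 2 / (2 * y)) ^ 2 - 2 * x ≠ 0) :
    fermatU D ((3 * x ^ 2 / (2 * y)) ^ 2 - 2 * x)
        (-(3 * x ^ 2 / (2 * y) * ((3 * x ^ 2 / (2 * y)) ^ 2 - 2 * x - x) + y)) =
      fermatU D x (-y) * (2 * fermatU D x y ^ 3 + fermatU D x (-y) ^ 3) /
        (fermatU D x (-y) ^ 3 - fermatU D x y ^ 3) := by
  have huv := fermatU_pow_three_add h hx
  rw [mordell_equation_iff] at h
  set u := fermatU D x y
  set v := fermatU D x (-y)
  -- `(x, y)` is recovered from `(u, v)`, turning the claim into an identity in `u` and `v`.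
  have hx' : x = 12 * (u ^ 2 - u * v + v ^ 2) := by
    simp only [u, v, fermatU]
    field_simp
    linear_combination -36 * h
  have hy' : y = 3 * x * (u - v) := by
    simp only [u, v, fermatU]
    field_simp
    ring
  clear_value u v
  subst hy' huv
  subst hx'
  have hq : u ^ 2 - u * v + v ^ 2 ≠ 0 := by contrapose! hx; rw [hx]; ring
  have huv : u - v ≠ 0 := by contrapose! hy; rw [hy]; ring
  have hcube : v ^ 3 - u ^ 3 ≠ 0 := by
    contrapose! hx₂
    have hq' : u ^ 2 + u * v + v ^ 2 = 0 := by
      refine (mul_eq_zero.1 ?_).resolve_left huv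
      linear_combination -hx₂
    field_simp
    linear_combination 48 * (u ^ 2 - u * v + v ^ 2) * hq'
  rw [fermatU, div_eq_div_iff (mul_ne_zero (by norm_num) hx₂) hcube]
  field_simp
  ring

lemma exists_add_self_eq_some (hD : D ≠ 0) (h : (mordell (-432 * D ^ 2)).Nonsingular x y)
    (hy : y ≠ 0) :
    ∃ x₂ y₂ : ℚ, ∃ h₂ : (mordell (-432 * D ^ 2)).Nonsingular x₂ y₂,
      Point.some _ _ h + Point.some _ _ h = Point.some _ _ h₂ ∧
      fermatU D x₂ y₂ = fermatU D x (-y) * (2 * fermatU D x y ^ 3 + fermatU D x (-y) ^ 3) /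
        (fermatU D x (-y) ^ 3 - fermatU D x y ^ 3) := by
  have hk : -432 * D ^ 2 < 0 := by nlinarith [sq_pos_of_ne_zero hD]
  have hyne : y ≠ (mordell (-432 * D ^ 2)).negY x y := by
    simpa [negY, mordell, eq_neg_iff_add_eq_zero, ← two_mul] using hy
  refine ⟨_, _, _, Point.add_self_of_Y_ne hyne, ?_⟩
  have hx₂ := x_ne_zero_of_equation_mordell hk (nonsingular_add h h fun hxy ↦ hyne hxy.2).1
  rw [slope_of_Y_ne rfl hyne] at hx₂ ⊢
  simp only [addX, addY, negAddY, negY, mordell] at hx₂ ⊢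
  convert fermatU_duplication h.1 (x_ne_zero_of_equation_mordell hk h.1) hy
    (by convert hx₂ using 1; ring) using 2 <;> ring

end

lemma CubeFree.fermatDen_lt_fermatDen_add_self {D : ℤ} (hD : CubeFree D) (hD2 : 2 < |D|)
    {P : (mordell (-432 * (D : ℚ) ^ 2)).Point} (hP : P ≠ 0) :
    P + P ≠ 0 ∧ fermatDen D P < fermatDen D (P + P) := by
  cases P with
  | zero => exact absurd rfl hP
  | @some x y h =>
    have hD0 : (D : ℚ) ≠ 0 := by
      rintro h0
      simp_all
    have hk : -432 * (D : ℚ) ^ 2 < 0 := by nlinarith [sq_pos_of_ne_zero hD0]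
    have huv := fermatU_pow_three_add h.1 (x_ne_zero_of_equation_mordell hk h.1)
    have hy : y ≠ 0 := by
      rintro rfl
      exact hD.two_mul_rat_pow_three_ne hD2 _ (by rw [← huv, neg_zero]; ring)
    obtain ⟨x₂, y₂, h₂, hadd, hu₂⟩ := exists_add_self_eq_some hD0 h hy
    rw [hadd]
    exact ⟨Point.some_ne_zero h₂,
      by simpa [fermatDen, hu₂] using hD.den_lt_den_duplication hD2 huv⟩

/-- For a cube-free integer `D > 2`, the torsion of `E_{-432D²}(ℚ)` is trivial. -/
theorem torsion_trivial (D : ℤ) (hD : 2 < D) (hcf : CubeFree D)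
    (P : (mordell (-432 * (D : ℚ) ^ 2)).Point) (hP : IsOfFinAddOrder P) : P = 0 :=
  hP.eq_zero_of_lt_apply_add_self fun _ hQ ↦
    hcf.fermatDen_lt_fermatDen_add_self (hD.trans_le (le_abs_self D)) hQ
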